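/- Let G be a finite group, n a positive integer, pa ∈ VPA_n(G), m a divisor of n, and χ an ordinary character of G (or Brauer character modulo a prime not dividing n). Define μ_m^−(pa, χ) = (1/n) Σ_{x^G} Σ_{d|n, m|d} pa_d(x) Tr_{Q(ζ_n^d)/Q}(χ(x)). Then 0 ≤ μ(1, pa, χ) ≤ m · μ_m^−(pa, χ). -/

import Mathlib

/-! Summing `μ(ξ, pa, χ)` over the `m`-th roots of unity `ξ = ζ_m^j` and using the
`ℚ`-linearity of the traces, the `d`-th summand picks up the geometric sum `Σ_j ζ_m^{-dj}`,
which is `m` if `m ∣ d` and `0` otherwise; hence `Σ_j μ(ζ_m^j) = m·μ_m^-`. By (V4) every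
summand is a non-negative integer, so the summand `j = 0`, which is `μ(1)`, lies between `0`
and the sum. -/

open scoped Classical
noncomputable section

/-- A fixed primitive `n`-th root of unity in `ℂ`. -/
def zetaC (n : ℕ) : ℂ := Complex.exp (2 * Real.pi * Complex.I / n)

/-- The cyclotomic field `ℚ(ζ_m)` as a subfield of `ℂ`. -/
def cycF (m : ℕ) : IntermediateField ℚ ℂ := IntermediateField.adjoin ℚ {zetaC m}

/-- Trace from `ℚ(ζ_m)` down to `ℚ` of a complex number lying in `ℚ(ζ_m)`
(junk value `0` otherwise). -/
def trQ (m : ℕ) (z : ℂ) : ℚ :=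
  if h : z ∈ cycF m then Algebra.trace ℚ (cycF m) ⟨z, h⟩ else 0

variable {G : Type} [Group G] [Fintype G]

/-- The sum of the values of `f` over a set of representatives of the conjugacy
classes of `G`. -/
def classSum {R : Type} [AddCommMonoid R] (f : G → R) : R :=
  ∑ c : ConjClasses G, f c.out

/-- The Luthar–Passi "multiplicity" of `ξ` attached to a list `pa` of class functions
(indexed by naturals; only indices dividing `n` matter) and a character `χ`. -/
def muLP (n : ℕ) (pa : ℕ → G → ℤ) (χ : G → ℂ) (ξ : ℂ) : ℂ :=
  (n : ℂ)⁻¹ * ∑ c : ConjClasses G, ∑ d ∈ n.divisors,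
    (pa d c.out : ℂ) * (trQ (n / d) (χ c.out * ξ ^ (-(d : ℤ))) : ℚ)

/-- `χ` is the character of a finite-dimensional complex representation of `G`. -/
def IsOrdChar (χ : G → ℂ) : Prop :=
  ∃ (m : ℕ) (ρ : Representation ℂ G (Fin m → ℂ)), ∀ g, χ g = LinearMap.trace ℂ _ (ρ g)

/-- `χ` is a Brauer character of `G` modulo the prime `p`: on `p`-regular elements it
is the sum of fixed lifts (to complex roots of unity) of the eigenvalues of a
representation of `G` over the algebraic closure of `𝔽_p`. -/
def IsBrauerChar (p : ℕ) (hp : p.Prime) (χ : G → ℂ) : Prop :=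
  haveI : Fact p.Prime := ⟨hp⟩
  ∃ (m : ℕ) (ρ : G →* Matrix.GeneralLinearGroup (Fin m) (AlgebraicClosure (ZMod p)))
    (φ : (AlgebraicClosure (ZMod p))ˣ →* ℂˣ),
    (∀ ζ : (AlgebraicClosure (ZMod p))ˣ, orderOf (φ ζ) = orderOf ζ) ∧
    ∀ g : G, ¬ p ∣ orderOf g →
      χ g = (((ρ g : Matrix (Fin m) (Fin m) (AlgebraicClosure (ZMod p))).charpoly.roots).map
        (fun r => if h : r = 0 then 0 else (φ (Units.mk0 r h) : ℂ))).sum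

/-- `pa` is a distribution of virtual partial augmentations of order `n` for `G`:
integer-valued class functions indexed by the divisors of `n` satisfying (V1)–(V4). -/
def IsVPA (n : ℕ) (pa : ℕ → G → ℤ) : Prop :=
  (∀ d, d ∣ n → ∀ g h : G, IsConj g h → pa d g = pa d h) ∧
  -- (V1)
  (∀ d, d ∣ n → classSum (pa d) = 1) ∧
  -- (V2)
  (∀ d, d ∣ n → d ≠ n → pa d 1 = 0) ∧
  -- (V3)
  (∀ d, d ∣ n → ∀ g : G, ¬ orderOf g ∣ n / d → pa d g = 0) ∧
  -- (V4) for ordinary characters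
  (∀ χ : G → ℂ, IsOrdChar χ → ∀ l : ℤ, ∃ k : ℕ, muLP n pa χ (zetaC n ^ l) = k) ∧
  -- (V4) for Brauer characters modulo primes not dividing `n`
  (∀ p (hp : p.Prime), ¬ p ∣ n → ∀ χ : G → ℂ, IsBrauerChar p hp χ →
    ∀ l : ℤ, ∃ k : ℕ, muLP n pa χ (zetaC n ^ l) = k)

/-- `pa` is the distribution of partial augmentations of an actual element of `G`
of order `n`. -/
def IsTPA (n : ℕ) (pa : ℕ → G → ℤ) : Prop :=
  ∃ g₀ : G, orderOf g₀ = n ∧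
    ∀ d, d ∣ n → ∀ h : G, pa d h = if IsConj (g₀ ^ d) h then 1 else 0

/-- Accumulated virtual partial augmentation at `m`: the sum of `f` over
representatives of the conjugacy classes of elements of order `m`. -/
def accPA (f : G → ℤ) (m : ℕ) : ℤ :=
  ∑ c : ConjClasses G, if orderOf c.out = m then f c.out else 0


/-- `μ_m^-(pa, χ) = (1/n) Σ_{x^G} Σ_{d ∣ n, m ∣ d} pa_d(x) Tr_{ℚ(ζ_n^d)/ℚ}(χ(x))`. -/
def muMinusLP (n m : ℕ) (pa : ℕ → G → ℤ) (χ : G → ℂ) : ℂ :=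
  (n : ℂ)⁻¹ * ∑ c : ConjClasses G, ∑ d ∈ n.divisors.filter (fun d => m ∣ d),
    (pa d c.out : ℂ) * (trQ (n / d) (χ c.out) : ℚ)

lemma zetaC_pow_of_dvd {n d : ℕ} (hn : n ≠ 0) (hd : d ∣ n) : zetaC n ^ d = zetaC (n / d) := by
  obtain ⟨e, rfl⟩ := hd
  have hd0 : d ≠ 0 := left_ne_zero_of_mul hn
  rw [Nat.mul_div_cancel_left _ (Nat.pos_of_ne_zero hd0), zetaC, zetaC, ← Complex.exp_nat_mul]
  congr 1
  push_cast
  field_simp [right_ne_zero_of_mul hn]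

lemma isPrimitiveRoot_zetaC {n : ℕ} (hn : n ≠ 0) : IsPrimitiveRoot (zetaC n) n :=
  Complex.isPrimitiveRoot_exp n hn

lemma zetaC_mem_cycF (n : ℕ) : zetaC n ∈ cycF n :=
  IntermediateField.subset_adjoin ℚ {zetaC n} rfl

lemma geom_sum_of_pow_eq_one {K : Type*} [Field K] {ω : K} {m : ℕ} (hω : ω ^ m = 1) :
    ∑ j ∈ Finset.range m, ω ^ j = if ω = 1 then (m : K) else 0 := by
  split_ifs with h
  · simp [h]
  · rw [geom_sum_eq h, hω, sub_self, zero_div]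

section trQ

variable {k : ℕ}

lemma trQ_coe (x : cycF k) : trQ k x = Algebra.trace ℚ (cycF k) x := dif_pos x.2

lemma trQ_of_notMem {z : ℂ} (h : z ∉ cycF k) : trQ k z = 0 := dif_neg h

lemma trQ_zero : trQ k 0 = 0 := by
  simpa using trQ_coe (0 : cycF k)

lemma mul_coe_notMem_cycF {z : ℂ} (hz : z ∉ cycF k) {w : cycF k} (hw : w ≠ 0) :
    z * w ∉ cycF k := fun h => hz <| by
  simpa [hw] using mul_mem h (inv_mem w.2)

lemma trQ_natCast_mul (q : ℕ) (z : ℂ) : trQ k (q * z) = q * trQ k z := by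
  by_cases hz : z ∈ cycF k
  · lift z to cycF k using hz
    rw [show (q : ℂ) * z = ((q : ℚ) • z : cycF k) by simp [Rat.smul_def], trQ_coe, trQ_coe,
      map_smul, smul_eq_mul]
  rcases eq_or_ne q 0 with rfl | hq
  · simp [trQ_zero]
  rw [trQ_of_notMem hz, mul_zero, mul_comm, trQ_of_notMem]
  exact mul_coe_notMem_cycF (w := (q : cycF k)) hz (Nat.cast_ne_zero.mpr hq)

/-- `trQ k` is additive only on `cycF k`; multiplying by nonzero elements of `cycF k` keeps
`z` on the same side of `cycF k`, which is what makes this sum additive. -/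
lemma sum_trQ_mul {ι : Type*} {s : Finset ι} {w : ι → cycF k} (hw : ∀ j ∈ s, w j ≠ 0)
    (z : ℂ) : ∑ j ∈ s, trQ k (z * w j) = trQ k (z * ↑(∑ j ∈ s, w j)) := by
  by_cases hz : z ∈ cycF k
  · lift z to cycF k using hz
    simp only [← IntermediateField.coe_mul, trQ_coe, Finset.mul_sum, map_sum]
  rw [Finset.sum_congr rfl fun j hj => trQ_of_notMem (mul_coe_notMem_cycF hz (hw j hj)),
    Finset.sum_const_zero]
  rcases eq_or_ne (∑ j ∈ s, w j) 0 with hS | hS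
  · rw [hS, IntermediateField.coe_zero, mul_zero, trQ_zero]
  · rw [trQ_of_notMem (mul_coe_notMem_cycF hz hS)]

lemma sum_trQ_mul_pow {ω : cycF k} {m : ℕ} (hω : ω ^ m = 1) (z : ℂ) :
    ∑ j ∈ Finset.range m, trQ k (z * ↑(ω ^ j)) = if ω = 1 then m * trQ k z else 0 := by
  rcases eq_or_ne m 0 with rfl | hm
  · simp
  have hω0 : ω ≠ 0 := by
    rintro rfl
    simp [zero_pow hm] at hω
  rw [sum_trQ_mul (fun j _ => pow_ne_zero j hω0), geom_sum_of_pow_eq_one hω]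
  split_ifs
  · simp [mul_comm z, trQ_natCast_mul]
  · simp [trQ_zero]

end trQ

section zetaC

variable {n m d : ℕ}

lemma zetaC_pow_div_of_dvd (hn : n ≠ 0) (hmn : m ∣ n) : zetaC n ^ (n / m) = zetaC m := by
  rw [zetaC_pow_of_dvd hn (Nat.div_dvd_of_dvd hmn), Nat.div_div_self hmn hn]

lemma zetaC_zpow_neg_mem_cycF (hn : n ≠ 0) (hmn : m ∣ n) (hd : d ∣ n) :
    zetaC m ^ (-(d : ℤ)) ∈ cycF (n / d) := by
  have h : zetaC m ^ (-(d : ℤ)) = zetaC (n / d) ^ (-((n / m : ℕ) : ℤ)) := by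
    rw [← zetaC_pow_div_of_dvd hn hmn, ← zetaC_pow_of_dvd hn hd, ← zpow_natCast, ← zpow_natCast,
      ← zpow_mul, ← zpow_mul, mul_neg, mul_neg, mul_comm]
  exact h ▸ zpow_mem (zetaC_mem_cycF _) _

/-- `ζ_m⁻ᵈ` is an `m`-th root of unity in `ℚ(ζ_{n/d})`, trivial exactly when `m ∣ d`. -/
lemma sum_trQ_mul_zetaC_pow_zpow (hn : n ≠ 0) (hmn : m ∣ n) (hd : d ∣ n) (z : ℂ) :
    ∑ j ∈ Finset.range m, trQ (n / d) (z * (zetaC m ^ j) ^ (-(d : ℤ))) =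
      if m ∣ d then m * trQ (n / d) z else 0 := by
  have hm : m ≠ 0 := ne_zero_of_dvd_ne_zero hn hmn
  set ω : cycF (n / d) := ⟨zetaC m ^ (-(d : ℤ)), zetaC_zpow_neg_mem_cycF hn hmn hd⟩
  have hpow (j : ℕ) : (zetaC m ^ j) ^ (-(d : ℤ)) = ↑(ω ^ j) := by
    rw [IntermediateField.coe_pow, ← zpow_natCast, ← zpow_natCast, ← zpow_mul, ← zpow_mul,
      mul_comm]
  have hωm : ω ^ m = 1 := by
    ext
    rw [← hpow, (isPrimitiveRoot_zetaC hm).pow_eq_one, one_zpow, IntermediateField.coe_one]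
  have hω1 : ω = 1 ↔ m ∣ d := by
    refine Subtype.ext_iff.trans ?_
    change zetaC m ^ (-(d : ℤ)) = 1 ↔ m ∣ d
    rw [(isPrimitiveRoot_zetaC hm).zpow_eq_one_iff_dvd, dvd_neg, Int.natCast_dvd_natCast]
  simp only [hpow, sum_trQ_mul_pow hωm, hω1]

end zetaC

lemma sum_muLP_zetaC_pow {n m : ℕ} (hn : n ≠ 0) (hmn : m ∣ n) (pa : ℕ → G → ℤ) (χ : G → ℂ) :
    ∑ j ∈ Finset.range m, muLP n pa χ (zetaC m ^ j) = m * muMinusLP n m pa χ := by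
  simp only [muLP, muMinusLP, ← Finset.mul_sum]
  rw [mul_left_comm, Finset.mul_sum (s := Finset.univ), Finset.sum_comm]
  congr 1
  refine Finset.sum_congr rfl fun c _ => ?_
  rw [Finset.sum_comm, Finset.sum_filter, Finset.mul_sum]
  refine Finset.sum_congr rfl fun d hd => ?_
  rw [← Finset.mul_sum, ← Rat.cast_sum,
    sum_trQ_mul_zetaC_pow_zpow hn hmn (Nat.dvd_of_mem_divisors hd)]
  split_ifs <;> push_cast <;> ring

lemma IsVPA.exists_muLP_eq_natCast {n : ℕ} {pa : ℕ → G → ℤ} (hpa : IsVPA n pa) {χ : G → ℂ}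
    (hχ : IsOrdChar χ ∨ ∃ p, ∃ hp : p.Prime, ¬ p ∣ n ∧ IsBrauerChar p hp χ) (l : ℤ) :
    ∃ k : ℕ, muLP n pa χ (zetaC n ^ l) = k := by
  obtain ⟨-, -, -, -, hord, hbrauer⟩ := hpa
  rcases hχ with hχ | ⟨p, hp, hpn, hχ⟩
  · exact hord χ hχ l
  · exact hbrauer p hp hpn χ hχ l

open ComplexOrder in
lemma IsVPA.muLP_zetaC_pow_nonneg {n m : ℕ} {pa : ℕ → G → ℤ} (hpa : IsVPA n pa) {χ : G → ℂ}
    (hχ : IsOrdChar χ ∨ ∃ p, ∃ hp : p.Prime, ¬ p ∣ n ∧ IsBrauerChar p hp χ)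
    (hn : n ≠ 0) (hmn : m ∣ n) (j : ℕ) : 0 ≤ muLP n pa χ (zetaC m ^ j) := by
  obtain ⟨k, hk⟩ := hpa.exists_muLP_eq_natCast hχ ((n / m * j : ℕ) : ℤ)
  rw [← zetaC_pow_div_of_dvd hn hmn, ← pow_mul, ← zpow_natCast, hk]
  exact Nat.cast_nonneg k

open ComplexOrder in
/-- For `pa ∈ VPA_n(G)`, `m ∣ n` and `χ` an ordinary character, or a Brauer character
modulo a prime not dividing `n`, one has `0 ≤ μ(1, pa, χ) ≤ m·μ_m^-(pa, χ)`. -/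
theorem muLP_one_le {G : Type} [Group G] [Fintype G]
    (n m : ℕ) (hn : 0 < n) (hm : 0 < m) (hmn : m ∣ n)
    (pa : ℕ → G → ℤ) (hpa : IsVPA n pa) (χ : G → ℂ)
    (hχ : IsOrdChar χ ∨ ∃ p, ∃ hp : p.Prime, ¬ p ∣ n ∧ IsBrauerChar p hp χ) :
    0 ≤ muLP n pa χ 1 ∧ muLP n pa χ 1 ≤ (m : ℂ) * muMinusLP n m pa χ := by
  have hnonneg := hpa.muLP_zetaC_pow_nonneg hχ hn.ne' hmn
  refine ⟨by simpa using hnonneg 0, ?_⟩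
  rw [← sum_muLP_zetaC_pow hn.ne' hmn]
  simpa using Finset.single_le_sum (fun j _ => hnonneg j) (Finset.mem_range.mpr hm)

end
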